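/- Let n ≥ 1 and let g be a 2n×2n real matrix with gᵀJg = J (i.e., g ∈ Sp(2n,ℝ)). Then for every integer k with 1 ≤ k ≤ 2n, the antiprincipal minors satisfy p_k(g⁻¹) = (−1)^k · p_k(g). -/
import Mathlib


open Matrix

/-- The standard symplectic matrix: the i-th column of `J` is `(−1)^i e_{2n+1−i}` (1-based);
equivalently the (2n+1−i, i) entry is (−1)^i and all other entries are 0. -/
def Jmat (n : ℕ) : Matrix (Fin (2*n)) (Fin (2*n)) ℝ :=
  Matrix.of fun i j => if (i:ℕ) + (j:ℕ) = 2*n - 1 then (-1 : ℝ)^((j:ℕ)+1) else 0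

/-- The antiprincipal k×k minor `p_k(g)`: the determinant of the k×k matrix whose (i,j) entry
(1-based) is `g_{i, 2n+1−j}`. -/
def pMinor (n k : ℕ) (g : Matrix (Fin (2*n)) (Fin (2*n)) ℝ) : ℝ :=
  Matrix.det (Matrix.of fun i j : Fin k =>
    if h : (i:ℕ) < 2*n then
      g ⟨(i:ℕ), h⟩ ⟨2*n - 1 - (j:ℕ), by omega⟩
    else 0)

lemma sign_eq (x y : ℕ) (h : x % 2 = y % 2) : ((-1:ℝ))^x = (-1)^y := by
  rcases Nat.even_or_odd x with hx | hx
  · have hx' := Nat.even_iff.mp hx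
    rw [hx.neg_one_pow, (Nat.even_iff.mpr (by omega : y % 2 = 0)).neg_one_pow]
  · have hx' := Nat.odd_iff.mp hx
    rw [hx.neg_one_pow, (Nat.odd_iff.mpr (by omega : y % 2 = 1)).neg_one_pow]

lemma Jmat_mul_Jmat (n : ℕ) : Jmat n * Jmat n = -1 := by
  ext a b
  have ha := a.isLt
  have hb := b.isLt
  rw [Matrix.mul_apply, Finset.sum_eq_single (⟨2*n-1-(a:ℕ), by omega⟩ : Fin (2*n))]
  · simp only [Jmat, of_apply]
    by_cases hab : (a:ℕ) = (b:ℕ)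
    · rw [if_pos (by omega), if_pos (by omega)]
      have : ((-1:ℝ))^(2*n-1-(a:ℕ)+1) * (-1)^((b:ℕ)+1) = -1 := by
        rw [← pow_add]
        have := sign_eq (2*n-1-(a:ℕ)+1 + ((b:ℕ)+1)) 1 (by omega)
        simpa using this
      rw [this]
      simp [Matrix.one_apply, Fin.ext_iff, hab]
    · have hcond : ¬ (((⟨2*n-1-(a:ℕ), by omega⟩ : Fin (2*n)) : ℕ) + (b:ℕ) = 2*n-1) := by
        simp only [Fin.val_mk]; omega
      rw [if_neg hcond]
      simp [Matrix.one_apply, Fin.ext_iff, hab]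
  · intro c _ hc
    have hc' : (c:ℕ) ≠ 2*n-1-(a:ℕ) := by
      intro h; exact hc (Fin.ext h)
    simp only [Jmat, of_apply]
    rw [if_neg (by omega), zero_mul]
  · intro h; exact absurd (Finset.mem_univ _) h

lemma symp_inv_eq {n : ℕ} {g : Matrix (Fin (2*n)) (Fin (2*n)) ℝ}
    (hg : gᵀ * Jmat n * g = Jmat n) :
    g⁻¹ = -(Jmat n * gᵀ * Jmat n) := by
  apply Matrix.inv_eq_left_inv
  have : -(Jmat n * gᵀ * Jmat n) * g = -(Jmat n * (gᵀ * Jmat n * g)) := by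
    noncomm_ring
  rw [this, hg, Jmat_mul_Jmat]
  simp

lemma symp_inv_apply {n : ℕ} {g : Matrix (Fin (2*n)) (Fin (2*n)) ℝ}
    (hg : gᵀ * Jmat n * g = Jmat n) (a b : Fin (2*n)) :
    g⁻¹ a b = (-1:ℝ)^((a:ℕ)+(b:ℕ)) *
      g ⟨2*n-1-(b:ℕ), by omega⟩ ⟨2*n-1-(a:ℕ), by omega⟩ := by
  have ha := a.isLt
  have hb := b.isLt
  rw [symp_inv_eq hg, Matrix.neg_apply, Matrix.mul_apply,
    Finset.sum_eq_single (⟨2*n-1-(b:ℕ), by omega⟩ : Fin (2*n))]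
  · rw [Matrix.mul_apply, Finset.sum_eq_single (⟨2*n-1-(a:ℕ), by omega⟩ : Fin (2*n))]
    · simp only [Jmat, of_apply, Matrix.transpose_apply]
      rw [if_pos (by omega), if_pos (by omega)]
      have : -(((-1:ℝ))^(2*n-1-(a:ℕ)+1) *
          g ⟨2*n-1-(b:ℕ), by omega⟩ ⟨2*n-1-(a:ℕ), by omega⟩ * (-1)^((b:ℕ)+1))
          = ((-1:ℝ)^(2*n-1-(a:ℕ)+1) * (-1)^((b:ℕ)+1) * (-1)) *
            g ⟨2*n-1-(b:ℕ), by omega⟩ ⟨2*n-1-(a:ℕ), by omega⟩ := by ring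
      rw [this]
      congr 1
      rw [mul_assoc, ← pow_succ, ← pow_add]
      exact sign_eq (2*n-1-(a:ℕ)+1 + ((b:ℕ)+1+1)) ((a:ℕ)+(b:ℕ)) (by omega)
    · intro c _ hc
      have hc' : (c:ℕ) ≠ 2*n-1-(a:ℕ) := fun h => hc (Fin.ext h)
      simp only [Jmat, of_apply]
      rw [if_neg (by omega), zero_mul]
    · intro h; exact absurd (Finset.mem_univ _) h
  · intro c _ hc
    have hc' : (c:ℕ) ≠ 2*n-1-(b:ℕ) := fun h => hc (Fin.ext h)
    simp only [Jmat, of_apply]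
    rw [if_neg (by omega), mul_zero]
  · intro h; exact absurd (Finset.mem_univ _) h

/-- Key Lemma: for `g ∈ Sp(2n,ℝ)`, `p_k(g⁻¹) = (−1)^k p_k(g)`. -/
theorem antiprincipal_minor_inverse (n : ℕ) (hn : 1 ≤ n)
    (g : Matrix (Fin (2*n)) (Fin (2*n)) ℝ) (hg : gᵀ * Jmat n * g = Jmat n)
    (k : ℕ) (hk1 : 1 ≤ k) (hk2 : k ≤ 2*n) :
    pMinor n k g⁻¹ = (-1 : ℝ)^k * pMinor n k g := by
  set A : Matrix (Fin k) (Fin k) ℝ := Matrix.of fun i j : Fin k =>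
    g ⟨(i:ℕ), by have := i.isLt; omega⟩ ⟨2*n-1-(j:ℕ), by omega⟩ with hA
  have hminor : ∀ (M : Matrix (Fin (2*n)) (Fin (2*n)) ℝ),
      pMinor n k M = Matrix.det (Matrix.of fun i j : Fin k =>
        M ⟨(i:ℕ), by have := i.isLt; omega⟩ ⟨2*n-1-(j:ℕ), by omega⟩) := by
    intro M
    unfold pMinor
    congr 1
    ext i j
    have hi := i.isLt
    simp only [of_apply]
    rw [dif_pos (by omega)]
  have hAg : pMinor n k g = A.det := hminor g
  rw [hminor g⁻¹, hAg]
  have hentry : (Matrix.of fun i j : Fin k =>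
      g⁻¹ ⟨(i:ℕ), by have := i.isLt; omega⟩ ⟨2*n-1-(j:ℕ), by omega⟩) =
      Matrix.of fun i j : Fin k => (-1:ℝ)^((i:ℕ)) * ((-1:ℝ)^((j:ℕ)+1) * Aᵀ i j) := by
    ext i j
    have hi := i.isLt
    have hj := j.isLt
    simp only [of_apply, Matrix.transpose_apply]
    rw [symp_inv_apply hg]
    have h1 : (⟨2*n-1-(2*n-1-(j:ℕ)), by omega⟩ : Fin (2*n)) = ⟨(j:ℕ), by omega⟩ :=
      Fin.ext (by simp only [Fin.val_mk]; omega)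
    rw [h1, hA]
    simp only [of_apply]
    rw [← mul_assoc, ← pow_add]
    congr 1
    exact sign_eq _ _ (by omega)
  rw [hentry]
  have e1 : (Matrix.of fun i j : Fin k => (-1:ℝ)^((i:ℕ)) * ((-1:ℝ)^((j:ℕ)+1) * Aᵀ i j)) =
      Matrix.of fun i j : Fin k => (fun i : Fin k => (-1:ℝ)^((i:ℕ))) i *
        (Matrix.of fun i j : Fin k => (-1:ℝ)^((j:ℕ)+1) * Aᵀ i j) i j := rfl
  rw [e1, Matrix.det_mul_column]
  have e2 : (Matrix.of fun i j : Fin k => (-1:ℝ)^((j:ℕ)+1) * Aᵀ i j) =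
      Matrix.of fun i j : Fin k => (fun j : Fin k => (-1:ℝ)^((j:ℕ)+1)) j * Aᵀ i j := rfl
  rw [e2, Matrix.det_mul_row]
  rw [Matrix.det_transpose, ← mul_assoc, ← Finset.prod_mul_distrib]
  congr 2
  calc (∏ i : Fin k, (-1:ℝ)^((i:ℕ)) * (-1:ℝ)^((i:ℕ)+1))
      = ∏ _i : Fin k, (-1:ℝ) := by
        apply Finset.prod_congr rfl
        intro i _
        rw [← pow_add]
        have := sign_eq ((i:ℕ) + ((i:ℕ)+1)) 1 (by omega)
        simpa using this
    _ = (-1:ℝ)^k := by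
        rw [Finset.prod_const, Finset.card_univ, Fintype.card_fin]
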